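/- For m ≥ 1, ν^m_{c_m − g_m + 1} = 2, where ν^m is the ν-sequence of Λ^m; hence δ^m_i = 2 for all i ≤ c_m − g_m. -/

import Mathlib

/-- The Garcia–Stichtenoth tower of Weierstrass semigroups:
`Λ¹ = ℕ₀`, `Λᵐ = q·Λ^{m-1} ∪ {i : i ≥ qᵐ - q^⌊(m+1)/2⌋}` for `m ≥ 2`. -/
def GSsemigroup (q : ℕ) : ℕ → Set ℕ
  | 0 => Set.univ
  | 1 => Set.univ
  | (m + 2) => (fun x => q * x) '' GSsemigroup q (m + 1) ∪
      {i : ℕ | q ^ (m + 2) - q ^ ((m + 3) / 2) ≤ i}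

/-- `c_m = q^m - q^⌊(m+1)/2⌋`, the conductor of `Λ^m`. -/
def gsC (q m : ℕ) : ℕ := q ^ m - q ^ ((m + 1) / 2)

/-- `g_m = (q^⌊(m+1)/2⌋ - 1)(q^⌈(m-1)/2⌉ - 1)`, the genus of `Λ^m`
(note `⌈(m-1)/2⌉ = ⌊m/2⌋` for `m ≥ 1`). -/
def gsG (q m : ℕ) : ℕ := (q ^ ((m + 1) / 2) - 1) * (q ^ (m / 2) - 1)

/-- `A_i = {j : q^{2i-1} - q^i ≤ j ≤ q^{2i-1} - q^{i-1} - 1}`. -/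
def gsA (q i : ℕ) : Set ℕ :=
  {j : ℕ | q ^ (2 * i - 1) - q ^ i ≤ j ∧ j ≤ q ^ (2 * i - 1) - q ^ (i - 1) - 1}

/-- The enumeration `λ` of `Λ^m`: the increasing bijection `ℕ₀ → Λ^m`. -/
noncomputable def gsEnum (q m : ℕ) : ℕ → ℕ := Nat.nth (fun n => n ∈ GSsemigroup q m)

/-- `ν_i = #{j : λ_i - λ_j ∈ Λ^m}` (the subtraction being in `ℤ`,
i.e. `∃ a ∈ Λ^m, λ_j + a = λ_i`). -/
noncomputable def gsNu (q m i : ℕ) : ℕ :=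
  Set.ncard {j : ℕ | ∃ a ∈ GSsemigroup q m, gsEnum q m j + a = gsEnum q m i}

/-- The order (Feng–Rao) bound `δ_i = min {ν_j : j > i}`. -/
noncomputable def gsDelta (q m i : ℕ) : ℕ := sInf (gsNu q m '' {j : ℕ | i < j})

/-- The semigroup floor `⌊k⌋_{Λ^m}`: the largest element of `Λ^m` not exceeding `k`. -/
noncomputable def gsFloor (q m k : ℕ) : ℕ := sSup {x ∈ GSsemigroup q m | x ≤ k}

/-- `λ⁻¹(x)` for `x ∈ Λ^m`: the number of elements of `Λ^m` below `x`. -/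
noncomputable def gsLinv (q m x : ℕ) : ℕ := Set.ncard {y ∈ GSsemigroup q m | y < x}

/-!
Below the conductor `c = c_m`, every nonzero element of `Λ^m` (`m ≥ 2`) is a multiple of `q`,
and `q ∣ c`; so `c + 1` admits no decomposition `x + y` with `x, y ∈ Λ^m` both nonzero, i.e. `ν = 2`
at the index of `c + 1`. Since `Λ^m ∩ [0, c_m) = q · (Λ^{m-1} ∩ [0, c_m / q))`, induction on `m`
gives `#(Λ^m ∩ [0, c_m)) = q^⌊m/2⌋ - 1 = c_m - g_m`, so `c + 1 = λ_{c-g+1}`. As `ν_j ≥ 2` for all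
`j ≥ 1`, the minimum defining `δ_i` is `2` whenever `i ≤ c - g`.
-/

namespace NumericalSemigroup

variable {S : Set ℕ}

-- `gsNu q m i` is definitionally `(nuIndices (GSsemigroup q m) i).ncard`.
def nuIndices (S : Set ℕ) (i : ℕ) : Set ℕ :=
  {j | ∃ a ∈ S, Nat.nth (· ∈ S) j + a = Nat.nth (· ∈ S) i}

theorem count_eq_add_of_Ici_subset [DecidablePred (· ∈ S)] {c n : ℕ} (hc : Set.Ici c ⊆ S)
    (hcn : c ≤ n) :
    Nat.count (· ∈ S) n = Nat.count (· ∈ S) c + (n - c) := by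
  obtain ⟨k, rfl⟩ := Nat.exists_eq_add_of_le hcn
  rw [Nat.count_add, Nat.count_of_forall fun i _ => hc (Nat.le_add_right c i)]
  omega

theorem count_image_mul_union_Ici {q : ℕ} (hq : 0 < q) (T : Set ℕ) (n : ℕ)
    [DecidablePred (· ∈ T)] [DecidablePred (· ∈ (q * ·) '' T ∪ Set.Ici (q * n))] :
    Nat.count (· ∈ (q * ·) '' T ∪ Set.Ici (q * n)) (q * n) = Nat.count (· ∈ T) n := by
  rw [Nat.count_eq_card_filter_range, Nat.count_eq_card_filter_range]
  have : {x ∈ Finset.range (q * n) | x ∈ (q * ·) '' T ∪ Set.Ici (q * n)}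
      = {y ∈ Finset.range n | y ∈ T}.image (q * ·) := by
    ext x
    simp only [Finset.mem_filter, Finset.mem_range, Finset.mem_image, Set.mem_union,
      Set.mem_image, Set.mem_Ici]
    constructor
    · rintro ⟨hx, ⟨y, hy, rfl⟩ | hx'⟩
      · exact ⟨y, ⟨lt_of_mul_lt_mul_left hx hq.le, hy⟩, rfl⟩
      · omega
    · rintro ⟨y, ⟨hyn, hy⟩, rfl⟩
      exact ⟨Nat.mul_lt_mul_of_pos_left hyn hq, Or.inl ⟨y, hy, rfl⟩⟩
  rw [this, Finset.card_image_of_injective _ (mul_right_injective₀ hq.ne')]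

theorem pair_subset_nuIndices (h0 : 0 ∈ S) (hinf : S.Infinite) (i : ℕ) :
    {0, i} ⊆ nuIndices S i := by
  rintro j (rfl | rfl)
  · exact ⟨_, Nat.nth_mem_of_infinite (p := (· ∈ S)) hinf i,
      by rw [Nat.nth_zero_of_zero h0, zero_add]⟩
  · exact ⟨0, h0, add_zero _⟩

theorem two_le_ncard_nuIndices (h0 : 0 ∈ S) (hinf : S.Infinite) {i : ℕ} (hi : i ≠ 0) :
    2 ≤ (nuIndices S i).ncard := by
  have hfin : (nuIndices S i).Finite := (Set.finite_Iic i).subset fun j ⟨a, _, h⟩ =>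
    (Nat.nth_strictMono (p := (· ∈ S)) hinf).le_iff_le.1 (h ▸ Nat.le_add_right _ a)
  rw [← Set.ncard_pair (Ne.symm hi)]
  exact Set.ncard_le_ncard (pair_subset_nuIndices h0 hinf i) hfin

theorem ncard_nuIndices_eq_two (h0 : 0 ∈ S) (hinf : S.Infinite) {i : ℕ} (hi : i ≠ 0)
    (hsum : ∀ x ∈ S, ∀ y ∈ S, x + y = Nat.nth (· ∈ S) i → x = 0 ∨ y = 0) :
    (nuIndices S i).ncard = 2 := by
  have hnth0 := Nat.nth_zero_of_zero h0
  have hinj := Nat.nth_injective (p := (· ∈ S)) hinf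
  suffices nuIndices S i = {0, i} by rw [this, Set.ncard_pair (Ne.symm hi)]
  refine Set.Subset.antisymm ?_ (pair_subset_nuIndices h0 hinf i)
  rintro j ⟨a, ha, h⟩
  rcases hsum _ (Nat.nth_mem_of_infinite (p := (· ∈ S)) hinf j) a ha h with hj | rfl
  · exact Or.inl (hinj (hj.trans hnth0.symm))
  · exact Or.inr (hinj (by simpa using h))

end NumericalSemigroup

open NumericalSemigroup

section GarciaStichtenoth

variable (q : ℕ)

theorem GSsemigroup_add_two (m : ℕ) :
    GSsemigroup q (m + 2) = (q * ·) '' GSsemigroup q (m + 1) ∪ Set.Ici (gsC q (m + 2)) :=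
  rfl

theorem zero_mem_GSsemigroup : ∀ m, 0 ∈ GSsemigroup q m
  | 0 | 1 => trivial
  | m + 2 => Or.inl ⟨0, zero_mem_GSsemigroup (m + 1), mul_zero q⟩

theorem Ici_gsC_subset_GSsemigroup : ∀ m, Set.Ici (gsC q m) ⊆ GSsemigroup q m
  | 0 | 1 => Set.subset_univ _
  | _ + 2 => Set.subset_union_right

theorem GSsemigroup_infinite (m : ℕ) : (GSsemigroup q m).Infinite :=
  (Set.Ici_infinite _).mono (Ici_gsC_subset_GSsemigroup q m)

theorem gsC_le_one (m : ℕ) (hm : m ≤ 1) : gsC q m = 0 := by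
  interval_cases m <;> simp [gsC]

theorem gsC_add_two (m : ℕ) : gsC q (m + 2) = q * (q ^ (m + 1) - q ^ ((m + 1) / 2)) := by
  rw [gsC, Nat.mul_sub, ← pow_succ', ← pow_succ', show (m + 2 + 1) / 2 = (m + 1) / 2 + 1 by omega]

theorem gsC_sub_gsG (hq : 1 ≤ q) (m : ℕ) : gsC q m - gsG q m = q ^ (m / 2) - 1 := by
  obtain ⟨a, ha⟩ : ∃ a, q ^ (m / 2) = a + 1 :=
    ⟨_, (Nat.succ_pred_eq_of_pos (by positivity)).symm⟩
  obtain ⟨b, hb⟩ : ∃ b, q ^ ((m + 1) / 2) = b + 1 :=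
    ⟨_, (Nat.succ_pred_eq_of_pos (by positivity)).symm⟩
  have hqm : q ^ m = (a + 1) * (b + 1) := by
    rw [← ha, ← hb, ← pow_add]; congr 1; omega
  rw [gsC, gsG, hqm, ha, hb, show (a + 1) * (b + 1) = a * b + a + b + 1 by ring]
  simp only [Nat.add_sub_cancel, mul_comm b a]
  omega

open Classical in
theorem count_GSsemigroup_gsC (hq : 1 ≤ q) :
    ∀ m, Nat.count (· ∈ GSsemigroup q m) (gsC q m) = q ^ (m / 2) - 1
  | 0 | 1 => by simp [gsC]
  | m + 2 => by
    have hpow : q ^ ((m + 1) / 2) ≤ q ^ ((m + 2) / 2) := Nat.pow_le_pow_right hq (by omega)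
    have hpow' : q ^ ((m + 2) / 2) ≤ q ^ (m + 1) := Nat.pow_le_pow_right hq (by omega)
    have hone : 1 ≤ q ^ ((m + 1) / 2) := Nat.one_le_pow _ _ hq
    have hc : gsC q (m + 1) ≤ q ^ (m + 1) - q ^ ((m + 1) / 2) := by
      rw [gsC, show (m + 1 + 1) / 2 = (m + 2) / 2 by omega]; omega
    rw [GSsemigroup_add_two, gsC_add_two, count_image_mul_union_Ici hq,
      count_eq_add_of_Ici_subset (Ici_gsC_subset_GSsemigroup q (m + 1)) hc,
      count_GSsemigroup_gsC hq (m + 1), gsC, show (m + 1 + 1) / 2 = (m + 2) / 2 by omega]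
    omega

open Classical in
theorem gsEnum_gsC_sub_gsG_add_one (hq : 1 ≤ q) (m : ℕ) :
    gsEnum q m (gsC q m - gsG q m + 1) = gsC q m + 1 := by
  have hmem := Ici_gsC_subset_GSsemigroup q m
  rw [gsC_sub_gsG q hq, ← count_GSsemigroup_gsC q hq,
    ← Nat.count_succ_eq_succ_count_iff.2 (hmem Set.self_mem_Ici)]
  exact Nat.nth_count (hmem (Set.mem_Ici.2 (Nat.le_succ _)))

theorem le_of_mem_GSsemigroup (hq : 2 ≤ q) {m x : ℕ} (hx : x ∈ GSsemigroup q (m + 2))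
    (hx0 : x ≠ 0) : q ≤ x := by
  rw [GSsemigroup_add_two] at hx
  rcases hx with ⟨y, -, rfl⟩ | hx
  · exact Nat.le_mul_of_pos_right q (Nat.pos_of_ne_zero (right_ne_zero_of_mul hx0))
  · refine le_trans ?_ (Set.mem_Ici.1 hx)
    rw [gsC_add_two]
    exact Nat.le_mul_of_pos_right q (Nat.sub_pos_of_lt (Nat.pow_lt_pow_right hq (by omega)))

theorem eq_zero_or_eq_zero_of_add_eq_gsC_add_one (hq : 2 ≤ q) :
    ∀ m, ∀ x ∈ GSsemigroup q m, ∀ y ∈ GSsemigroup q m, x + y = gsC q m + 1 → x = 0 ∨ y = 0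
  | 0, x, _, y, _, h | 1, x, _, y, _, h => by rw [gsC_le_one q _ (by omega)] at h; omega
  | m + 2, x, hx, y, hy, h => by
    by_contra! hxy
    have hqx := le_of_mem_GSsemigroup q hq hx hxy.1
    have hqy := le_of_mem_GSsemigroup q hq hy hxy.2
    rw [GSsemigroup_add_two] at hx hy
    rcases hx with ⟨x, -, rfl⟩ | hx
    · rcases hy with ⟨y, -, rfl⟩ | hy
      · have : q ∣ 1 := by
          rw [← Nat.dvd_add_right (gsC_add_two q m ▸ dvd_mul_right q _), ← h, ← mul_add]
          exact dvd_mul_right q _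
        exact absurd (Nat.le_of_dvd one_pos this) (by omega)
      · exact absurd (Set.mem_Ici.1 hy) (by omega)
    · exact absurd (Set.mem_Ici.1 hx) (by omega)

end GarciaStichtenoth

theorem stmt19_general (q : ℕ) (hq : 2 ≤ q) (m : ℕ) :
    gsNu q m (gsC q m - gsG q m + 1) = 2 ∧
    ∀ i : ℕ, i ≤ gsC q m - gsG q m → gsDelta q m i = 2 := by
  have h0 := zero_mem_GSsemigroup q m
  have hinf := GSsemigroup_infinite q m
  have hnu : gsNu q m (gsC q m - gsG q m + 1) = 2 :=
    ncard_nuIndices_eq_two h0 hinf (Nat.succ_ne_zero _) fun x hx y hy hxy =>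
      eq_zero_or_eq_zero_of_add_eq_gsC_add_one q hq m x hx y hy
        (hxy.trans (gsEnum_gsC_sub_gsG_add_one q (by omega) m))
  refine ⟨hnu, fun i hi => IsLeast.csInf_eq ⟨⟨_, Nat.lt_succ_of_le hi, hnu⟩, ?_⟩⟩
  rintro _ ⟨j, hij, rfl⟩
  exact two_le_ncard_nuIndices h0 hinf (Nat.ne_zero_of_lt hij)

/-- `ν^m_{c_m - g_m + 1} = 2`, hence `δ^m_i = 2` for all `i ≤ c_m - g_m`. -/
theorem stmt19 (q : ℕ) (hq : 2 ≤ q) (m : ℕ) (hm : 1 ≤ m) :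
    gsNu q m (gsC q m - gsG q m + 1) = 2 ∧
    ∀ i : ℕ, i ≤ gsC q m - gsG q m → gsDelta q m i = 2 :=
  stmt19_general q hq m
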